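/- arXiv:2003.09445 — 7 statements merged into one kernel-verified Lean document; each statement's English description precedes it below -/
import Mathlib

section
/- A finite group G is an EPPO-group if and only if for every prime p and every nontrivial p-subgroup A of G, the centralizer C_G(A) is a p-group (equivalently, is contained in some Sylow p-subgroup of G). -/
/-- A group is an EPPO-group if every element has prime power order. -/
def IsEPPOGroup (G : Type*) [Group G] : Prop :=
  ∀ g : G, ∃ (p n : ℕ), p.Prime ∧ orderOf g = p ^ n

theorem EPPO_iff_centralizer_of_pSubgroup_is_pGroup {G : Type*} [Group G] [Finite G] :
    IsEPPOGroup G ↔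
      ∀ (p : ℕ), p.Prime → ∀ A : Subgroup G, A ≠ ⊥ → IsPGroup p A →
        IsPGroup p (Subgroup.centralizer (A : Set G)) := by
  constructor
  · intro hE p hp A hAbot hA
    -- pick a nontrivial element a of A
    obtain ⟨a, haA, ha1⟩ : ∃ a ∈ A, a ≠ (1 : G) := by
      by_contra hcon
      push_neg at hcon
      exact hAbot (Subgroup.eq_bot_iff_forall A |>.mpr (by simpa using hcon))
    -- a has order p^j with j ≥ 1
    obtain ⟨k, hk⟩ := hA ⟨a, haA⟩
    have hak : a ^ p ^ k = 1 := by
      have := congrArg (Subtype.val) hk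
      simpa using this
    obtain ⟨j, hjk, hordera⟩ := (Nat.dvd_prime_pow hp).mp (orderOf_dvd_of_pow_eq_one hak)
    have hj : 0 < j := by
      rcases Nat.eq_zero_or_pos j with h0 | h
      · exfalso; apply ha1
        have : orderOf a = 1 := by simp [hordera, h0]
        exact orderOf_eq_one_iff.mp this
      · exact h
    intro x
    obtain ⟨q, n, hq, hordx⟩ := hE (x : G)
    rcases Nat.eq_zero_or_pos n with h0 | hn
    · refine ⟨0, ?_⟩
      have hx1 : (x : G) = 1 := orderOf_eq_one_iff.mp (by simp [hordx, h0])
      ext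
      simp [hx1]
    · -- show q = p
      have hcomm : Commute (x : G) a := by
        have := x.2
        rw [Subgroup.mem_centralizer_iff] at this
        exact Commute.symm (this a haA)
      have hqp : q = p := by
        by_contra hne
        have hcop : (orderOf (x : G)).Coprime (orderOf a) := by
          rw [hordx, hordera]
          exact ((Nat.coprime_primes hq hp).mpr hne).pow n j
        have hmul : orderOf ((x : G) * a) = orderOf (x : G) * orderOf a :=
          Commute.orderOf_mul_eq_mul_orderOf_of_coprime hcomm hcop
        obtain ⟨r, m, hr, hordm⟩ := hE ((x : G) * a)
        rw [hordx, hordera] at hmul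
        rw [hordm] at hmul
        have hqd : q ∣ r ^ m := by
          rw [hmul]; exact dvd_mul_of_dvd_left (dvd_pow_self q hn.ne') _
        have hpd : p ∣ r ^ m := by
          rw [hmul]; exact dvd_mul_of_dvd_right (dvd_pow_self p hj.ne') _
        have hqr : q = r := (Nat.prime_dvd_prime_iff_eq hq hr).mp (hq.dvd_of_dvd_pow hqd)
        have hpr : p = r := (Nat.prime_dvd_prime_iff_eq hp hr).mp (hp.dvd_of_dvd_pow hpd)
        exact hne (hqr.trans hpr.symm)
      refine ⟨n, ?_⟩
      have : (x : G) ^ p ^ n = 1 := by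
        rw [← hqp, ← hordx]; exact pow_orderOf_eq_one _
      ext
      simpa using this
  · intro h g
    rcases eq_or_ne g 1 with rfl | hg
    · exact ⟨2, 0, Nat.prime_two, by simp⟩
    have hord : 1 < orderOf g := by
      have : orderOf g ≠ 1 := fun h1 => hg (orderOf_eq_one_iff.mp h1)
      have : 0 < orderOf g := orderOf_pos g
      omega
    set p := (orderOf g).minFac with hp
    have hpp : p.Prime := Nat.minFac_prime (by omega)
    have hpd : p ∣ orderOf g := Nat.minFac_dvd _
    set a := g ^ (orderOf g / p) with hadef
    have hap : a ^ p = 1 := by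
      rw [hadef, ← pow_mul, Nat.div_mul_cancel hpd, pow_orderOf_eq_one]
    have ha1 : a ≠ 1 := by
      intro h1
      have : orderOf g ∣ orderOf g / p := orderOf_dvd_of_pow_eq_one h1
      have hlt : orderOf g / p < orderOf g :=
        Nat.div_lt_self (by omega) hpp.one_lt
      have := Nat.le_of_dvd (by
        rcases Nat.eq_zero_or_pos (orderOf g / p) with h0 | h
        · exfalso
          have := Nat.div_mul_cancel hpd
          rw [h0] at this
          omega
        · exact h) this
      omega
    set A := Subgroup.zpowers a with hA
    have haA : a ∈ A := Subgroup.mem_zpowers a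
    have hAbot : A ≠ ⊥ := by
      intro hb
      exact ha1 (by simpa [hb, Subgroup.mem_bot] using haA)
    have hApG : IsPGroup p A := by
      intro x
      refine ⟨1, ?_⟩
      obtain ⟨m, hm⟩ := x.2
      ext
      push_cast
      rw [← hm, pow_one, ← zpow_natCast, ← zpow_mul, mul_comm, zpow_mul, zpow_natCast, hap,
        one_zpow]
    have hgC : g ∈ Subgroup.centralizer (A : Set G) := by
      rw [Subgroup.mem_centralizer_iff]
      intro b hb
      obtain ⟨m, hm⟩ := hb
      have : Commute g b := by
        rw [← hm, hadef]
        exact ((Commute.refl g).pow_right _).zpow_right m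
      exact this.symm.eq
    obtain ⟨k, hk⟩ := h p hpp A hAbot hApG ⟨g, hgC⟩
    have hgk : g ^ p ^ k = 1 := by
      have := congrArg Subtype.val hk
      simpa using this
    obtain ⟨m, _, hm⟩ := (Nat.dvd_prime_pow hpp).mp (orderOf_dvd_of_pow_eq_one hgk)
    exact ⟨p, m, hpp, hm⟩
end

section
/- Let p and q be distinct primes, α, β positive integers, and let G = ⟨a, b : a^(p^α) = 1, b^(q^β) = 1, b⁻¹ab = a^r⟩ where the multiplicative order of r modulo p^α is q^β. Then every element of G has prime power order. -/
/-!
Every element of `G` is `a ^ i * b ^ j`, because `⟨a⟩` is normal. If `b ^ j` centralises `a` then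
`b ^ j = 1` and the element is a `p`-element. Otherwise `b ^ j` acts on `⟨a⟩` as `x ↦ x ^ u` with
`u ≠ 1` a `q ^ β`-th root of unity in `ZMod (p ^ α)`. The units `≡ 1 (mod p)` form a `p`-group,
so `u ≢ 1 (mod p)`, `u - 1` is a unit and `∑_{t < q ^ β} u ^ t = 0`. Hence
`(a ^ i * b ^ j) ^ (q ^ β) = a ^ (i * u * ∑_{t < q ^ β} u ^ t) = 1`.
-/

open Finset Subgroup

namespace ZMod

theorem isUnit_or_prime_dvd {p k : ℕ} (hp : p.Prime) (x : ZMod (p ^ k)) :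
    IsUnit x ∨ (p : ZMod (p ^ k)) ∣ x := by
  rcases k.eq_zero_or_pos with rfl | hk
  · exact .inl (isUnit_of_subsingleton (M := ZMod 1) x)
  · have : NeZero (p ^ k) := ⟨pow_ne_zero k hp.ne_zero⟩
    rw [← natCast_zmod_val x, isUnit_natCast_iff_not_dvd_pow hp hk]
    exact (em' _).imp id Nat.cast_dvd_cast

theorem eq_one_of_pow_eq_one_of_dvd_sub_one {p k n : ℕ} (hn : n.Coprime p)
    {u : ZMod (p ^ k)} (hu : u ^ n = 1) (hdvd : (p : ZMod (p ^ k)) ∣ u - 1) : u = 1 := by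
  cases k with
  | zero => exact Subsingleton.elim (α := ZMod 1) _ _
  | succ k =>
    have hpk : u ^ p ^ k = 1 := by
      have h := dvd_sub_pow_of_dvd_sub hdvd k
      rw [← Nat.cast_pow, natCast_self, zero_dvd_iff, one_pow, sub_eq_zero] at h
      exact h
    exact orderOf_eq_one_iff.mp <| Nat.eq_one_of_dvd_coprimes (hn.pow_right k)
      (orderOf_dvd_of_pow_eq_one hu) (orderOf_dvd_of_pow_eq_one hpk)

theorem geom_sum_eq_zero_of_pow_eq_one {p k n : ℕ} (hp : p.Prime) (hn : n.Coprime p)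
    {u : ZMod (p ^ k)} (hu : u ^ n = 1) (hu1 : u ≠ 1) : ∑ t ∈ range n, u ^ t = 0 := by
  have hunit : IsUnit (u - 1) := (isUnit_or_prime_dvd hp (u - 1)).resolve_right
    fun h ↦ hu1 (eq_one_of_pow_eq_one_of_dvd_sub_one hn hu h)
  rw [← hunit.mul_left_eq_zero, geom_sum_mul, hu, sub_self]

end ZMod

section ConjEqPow

variable {G : Type*} [Group G] {x y : G} {s : ℕ}

theorem conj_pow_pow_of_conj_eq_pow (h : y⁻¹ * x * y = x ^ s) (k m : ℕ) :
    (y ^ m)⁻¹ * x ^ k * y ^ m = x ^ (k * s ^ m) := by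
  induction m with
  | zero => simp
  | succ m ih =>
    calc (y ^ (m + 1))⁻¹ * x ^ k * y ^ (m + 1)
        = y⁻¹ * ((y ^ m)⁻¹ * x ^ k * y ^ m) * y⁻¹⁻¹ := by group
      _ = (y⁻¹ * x * y) ^ (k * s ^ m) := by rw [ih, ← conj_pow, inv_inv]
      _ = x ^ (k * s ^ (m + 1)) := by rw [h, ← pow_mul]; ring_nf

theorem mul_pow_of_conj_eq_pow (h : y⁻¹ * x * y = x ^ s) (m : ℕ) :
    (x * y) ^ m = y ^ m * x ^ (s * ∑ t ∈ range m, s ^ t) := by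
  have hswap (k : ℕ) : x ^ k * y = y * x ^ (k * s) := by
    rw [← pow_one s, ← conj_pow_pow_of_conj_eq_pow h k 1]; group
  induction m with
  | zero => simp
  | succ m ih =>
    calc (x * y) ^ (m + 1) = y ^ m * (x ^ (s * ∑ t ∈ range m, s ^ t + 1) * y) := by
          rw [pow_succ, ih, pow_succ]; group
      _ = y ^ (m + 1) * x ^ (s * ∑ t ∈ range (m + 1), s ^ t) := by
          rw [hswap, ← mul_assoc, ← pow_succ, geom_sum_succ]; congr 2; ring

end ConjEqPow

namespace Subgroup

variable {G : Type*} [Group G] {a b : G}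

theorem normal_zpowers_of_closure_pair_eq_top [Finite G] (hgen : closure {a, b} = ⊤)
    (h : b⁻¹ * a * b ∈ zpowers a) : (zpowers a).Normal := by
  have hb : b⁻¹ ∈ normalizer (zpowers a : Set G) := by
    refine mem_normalizer_fintype ?_
    rintro _ ⟨k, rfl⟩
    rw [← conj_zpow, inv_inv]
    exact zpow_mem h k
  rw [← normalizer_eq_top_iff, eq_top_iff, ← hgen, closure_le]
  exact Set.insert_subset (le_normalizer (mem_zpowers a))
    (Set.singleton_subset_iff.mpr (by simpa using inv_mem hb))

theorem exists_pow_mul_pow_eq_of_closure_pair_eq_top [Finite G] (hgen : closure {a, b} = ⊤)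
    (hN : (zpowers a).Normal) (g : G) : ∃ i j : ℕ, a ^ i * b ^ j = g := by
  have hg : g ∈ zpowers a ⊔ zpowers b := by
    rw [zpowers_eq_closure, zpowers_eq_closure, ← closure_union, Set.singleton_union, hgen]
    exact mem_top g
  obtain ⟨_, hx, _, hy, rfl⟩ := mem_sup_of_normal_left.mp hg
  obtain ⟨i, rfl⟩ := mem_powers_iff_mem_zpowers.mpr hx
  obtain ⟨j, rfl⟩ := mem_powers_iff_mem_zpowers.mpr hy
  exact ⟨i, j, rfl⟩

end Subgroup

theorem metacyclic_presentation_is_EPPO_general {G : Type*} [Group G] [Finite G]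
    {p q : ℕ} (hp : p.Prime) (hq : q.Prime) (hpq : p ≠ q)
    {α β : ℕ} (a b : G) (r : ℕ)
    (hgen : Subgroup.closure ({a, b} : Set G) = ⊤)
    (ha : orderOf a = p ^ α) (hb : orderOf b = q ^ β)
    (hconj : b⁻¹ * a * b = a ^ r)
    (hr : orderOf (r : ZMod (p ^ α)) = q ^ β) :
    ∀ g : G, ∃ (s n : ℕ), s.Prime ∧ orderOf g = s ^ n := by
  have hN := normal_zpowers_of_closure_pair_eq_top hgen (hconj ▸ pow_mem (mem_zpowers a) r)
  intro g
  obtain ⟨i, j, rfl⟩ := exists_pow_mul_pow_eq_of_closure_pair_eq_top hgen hN g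
  by_cases hu : (r : ZMod (p ^ α)) ^ j = 1
  · have hbj : b ^ j = 1 := by
      rw [← orderOf_dvd_iff_pow_eq_one, hb, ← hr]
      exact orderOf_dvd_of_pow_eq_one hu
    obtain ⟨n, -, hn⟩ := (Nat.dvd_prime_pow hp).mp (ha ▸ orderOf_pow_dvd i)
    exact ⟨p, n, hp, by rw [hbj, mul_one, hn]⟩
  have hqp : (q ^ β).Coprime p := ((Nat.coprime_primes hq hp).mpr hpq.symm).pow_left β
  have hsum := ZMod.geom_sum_eq_zero_of_pow_eq_one hp hqp
    (by rw [← pow_mul, mul_comm, pow_mul, ← hr, pow_orderOf_eq_one, one_pow]) hu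
  have hexp : a ^ (r ^ j * ∑ t ∈ range (q ^ β), (r ^ j) ^ t) = 1 := by
    rw [← orderOf_dvd_iff_pow_eq_one, ha, ← ZMod.natCast_eq_zero_iff]
    push_cast
    rw [hsum, mul_zero]
  have hbq : (b ^ j) ^ q ^ β = 1 := by rw [pow_right_comm, ← hb, pow_orderOf_eq_one, one_pow]
  have hconj_ij : (b ^ j)⁻¹ * a ^ i * b ^ j = (a ^ i) ^ r ^ j := by
    rw [conj_pow_pow_of_conj_eq_pow hconj, pow_mul]
  have := Fact.mk hq
  obtain ⟨n, hn⟩ := exists_orderOf_eq_prime_pow_iff.mpr ⟨β, by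
    rw [mul_pow_of_conj_eq_pow hconj_ij, hbq, one_mul, pow_right_comm, hexp, one_pow]⟩
  exact ⟨q, n, hq, hn⟩

theorem metacyclic_presentation_is_EPPO {G : Type*} [Group G] [Finite G]
    {p q : ℕ} (hp : p.Prime) (hq : q.Prime) (hpq : p ≠ q)
    {α β : ℕ} (hα : 0 < α) (hβ : 0 < β) (a b : G) (r : ℕ)
    (hgen : Subgroup.closure ({a, b} : Set G) = ⊤)
    (ha : orderOf a = p ^ α) (hb : orderOf b = q ^ β)
    (hconj : b⁻¹ * a * b = a ^ r)
    (hr : orderOf (r : ZMod (p ^ α)) = q ^ β) :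
    ∀ g : G, ∃ (s n : ℕ), s.Prime ∧ orderOf g = s ^ n :=
  metacyclic_presentation_is_EPPO_general hp hq hpq a b r hgen ha hb hconj hr
end

section
/- Let G be a finite EPPO-group, d > 1 a natural number, and H a subgroup of G with gcd(|H|, d) = 1. Then |H| divides the number of elements of order d in G. -/
open MulAction in
/-- For a free action of a finite group on a finite type, the cardinality of the group divides
the cardinality of the type. -/
lemma card_dvd_of_free_action {H : Type*} [Group H] [Finite H] {S : Type*} [Finite S]
    [MulAction H S] (hfree : ∀ (h : H) (s : S), h • s = s → h = 1) :
    Nat.card H ∣ Nat.card S := by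
  have hstab : ∀ s : S, MulAction.stabilizer H s = ⊥ := by
    intro s
    ext h
    simp only [MulAction.mem_stabilizer_iff, Subgroup.mem_bot]
    exact ⟨fun hh => hfree h s hh, fun hh => by simp [hh]⟩
  classical
  letI : Fintype S := Fintype.ofFinite S
  letI : Fintype H := Fintype.ofFinite H
  letI : Fintype (Quotient (orbitRel H S)) := Fintype.ofFinite _
  letI : ∀ ω : Quotient (orbitRel H S), Fintype (H ⧸ stabilizer H (Quotient.out ω)) :=
    fun _ => Fintype.ofFinite _
  have key : ∀ ω : Quotient (orbitRel H S),
      Fintype.card (H ⧸ stabilizer H (Quotient.out ω)) = Fintype.card H := by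
    intro ω
    rw [← Nat.card_eq_fintype_card, ← Nat.card_eq_fintype_card, hstab,
      ← Subgroup.index, Subgroup.index_bot]
  have h1 := Fintype.card_congr (selfEquivSigmaOrbitsQuotientStabilizer H S)
  rw [Fintype.card_sigma] at h1
  simp_rw [key] at h1
  rw [Finset.sum_const, smul_eq_mul] at h1
  rw [Nat.card_eq_fintype_card, Nat.card_eq_fintype_card, h1]
  exact Dvd.intro_left _ rfl

theorem card_subgroup_dvd_card_elements_of_order {G : Type*} [Group G] [Finite G]
    (hG : IsEPPOGroup G) (H : Subgroup G) {d : ℕ} (hd : 1 < d)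
    (hco : Nat.Coprime (Nat.card H) d) :
    Nat.card H ∣ Nat.card {g : G // orderOf g = d} := by
  letI : MulAction H {g : G // orderOf g = d} :=
    { smul := fun h g => ⟨(h : G) * g * (h : G)⁻¹, by
        exact ((SemiconjBy.orderOf_eq (h : G)
          (by show (h:G) * g = ((h:G)*g*(h:G)⁻¹) * (h:G); group :
            SemiconjBy (h:G) (g:G) ((h:G)*g*(h:G)⁻¹))).symm).trans g.2⟩
      one_smul := fun g => by ext; simp [HSMul.hSMul]
      mul_smul := fun h h' g => by
        ext
        show ((h * h' : H) : G) * g * ((h * h' : H) : G)⁻¹ =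
          (h : G) * ((h' : G) * g * (h' : G)⁻¹) * (h : G)⁻¹
        push_cast
        group }
  apply card_dvd_of_free_action
  rintro h ⟨s, hs⟩ heq
  have hcomm : Commute (h : G) s := by
    have : (h : G) * s * (h : G)⁻¹ = s := congrArg Subtype.val heq
    have h2 : (h : G) * s = s * (h : G) := by nth_rewrite 2 [← this]; group
    exact h2
  have hdvd : orderOf (h : G) ∣ Nat.card H := by
    rw [Subgroup.orderOf_coe]
    exact orderOf_dvd_natCard h
  have hcop : Nat.Coprime (orderOf (h : G)) d := Nat.Coprime.coprime_dvd_left hdvd hco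
  have hmul : orderOf ((h : G) * s) = orderOf (h : G) * d := by
    rw [hcomm.orderOf_mul_eq_mul_orderOf_of_coprime (by rw [hs]; exact hcop), hs]
  obtain ⟨p, n, hp, hpn⟩ := hG ((h : G) * s)
  rw [hmul] at hpn
  have hddvd : d ∣ p ^ n := hpn ▸ dvd_mul_left d _
  have hhdvd : orderOf (h : G) ∣ p ^ n := ⟨d, hpn.symm⟩
  have hpd : p ∣ d := by
    obtain ⟨j, hjle, hdj⟩ := (Nat.dvd_prime_pow hp).mp hddvd
    have hj : j ≠ 0 := by rintro rfl; simp at hdj; omega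
    exact hdj ▸ dvd_pow_self p hj
  have h1 : orderOf (h : G) = 1 := by
    obtain ⟨k, hkle, hk⟩ := (Nat.dvd_prime_pow hp).mp hhdvd
    rcases Nat.eq_zero_or_pos k with hk0 | hk0
    · rw [hk, hk0, pow_zero]
    · exfalso
      have hph : p ∣ orderOf (h : G) := hk ▸ dvd_pow_self p hk0.ne'
      have hpg : p ∣ Nat.gcd (orderOf (h : G)) d := Nat.dvd_gcd hph hpd
      rw [Nat.Coprime] at hcop
      rw [hcop] at hpg
      have := Nat.dvd_one.mp hpg
      have := hp.one_lt
      omega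
  have : (h : G) = 1 := orderOf_eq_one_iff.mp h1
  exact Subtype.ext this
end

section
/- Let G be a finite EPPO-group and N a normal subgroup of G. Then the product of p^(α_p) over all primes p dividing |G| but not dividing |N|, where p^(α_p) is the p-part of |G|, divides |N| − 1. -/
open MulAction

theorem MulAction.card_dvd_card_of_isCancelSMul (G X : Type*) [Group G] [MulAction G X]
    [IsCancelSMul G X] : Nat.card G ∣ Nat.card X := by
  rw [Nat.card_congr (selfEquivOrbitsQuotientProd (G := G) (X := X)
    IsCancelSMul.stabilizer_eq_bot), Nat.card_prod]
  exact dvd_mul_left (Nat.card G) _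

theorem MulDistribMulAction.card_dvd_card_sub_one {H N : Type*} [Group H] [Monoid N] [Finite N]
    [MulDistribMulAction H N] (h : ∀ (g : H) (n : N), n ≠ 1 → g • n = n → g = 1) :
    Nat.card H ∣ Nat.card N - 1 := by
  let S : SubMulAction H N :=
    { carrier := {1}ᶜ
      smul_mem' := fun g n (hn : n ≠ 1) =>
        (smul_one g : g • (1 : N) = 1) ▸ (MulAction.injective g).ne hn }
  have : IsCancelSMul H S := isCancelSMul_iff_eq_one_of_smul_eq.mpr fun g n hgn =>
    h g n n.2 (congrArg Subtype.val hgn)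
  have hS : Nat.card S = Nat.card N - 1 := by
    rw [← Set.ncard_singleton (1 : N), ← Set.ncard_compl]
    rfl
  exact hS ▸ card_dvd_card_of_isCancelSMul H S

theorem IsEPPOGroup.eq_one_or_eq_one_of_commute {G : Type*} [Group G] (hG : IsEPPOGroup G)
    {a b : G} (hab : Commute a b) (hcop : (orderOf a).Coprime (orderOf b)) : a = 1 ∨ b = 1 := by
  obtain ⟨q, j, hq, hqj⟩ := hG (a * b)
  rw [hab.orderOf_mul_eq_mul_orderOf_of_coprime hcop] at hqj
  obtain ⟨i, -, hi⟩ := (Nat.dvd_prime_pow hq).mp (Dvd.intro _ hqj)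
  obtain ⟨k, -, hk⟩ := (Nat.dvd_prime_pow hq).mp (Dvd.intro_left _ hqj)
  rw [hi, hk] at hcop
  suffices orderOf a = 1 ∨ orderOf b = 1 by simpa only [orderOf_eq_one_iff] using this
  rw [hi, hk]
  by_contra! h
  have hi0 : i ≠ 0 := by rintro rfl; exact h.1 (pow_zero q)
  have hk0 : k ≠ 0 := by rintro rfl; exact h.2 (pow_zero q)
  exact hq.ne_one (Nat.eq_one_of_dvd_coprimes hcop (dvd_pow_self q hi0) (dvd_pow_self q hk0))

theorem IsEPPOGroup.pow_factorization_dvd_card_normal_sub_one {G : Type*} [Group G] [Finite G]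
    (hG : IsEPPOGroup G) (N : Subgroup G) [N.Normal] {p : ℕ} [Fact p.Prime]
    (hpN : ¬ p ∣ Nat.card N) : p ^ (Nat.card G).factorization p ∣ Nat.card N - 1 := by
  -- Taking the Sylow subgroup inside `ConjAct G` lets it act on `N` by conjugation.
  have : Finite (ConjAct G) := .of_equiv G ConjAct.toConjAct.toEquiv
  obtain ⟨P⟩ : Nonempty (Sylow p (ConjAct G)) := inferInstance
  have hP : Nat.card P = p ^ (Nat.card G).factorization p := by
    rw [P.card_eq_multiplicity, Nat.card_congr ConjAct.ofConjAct.toEquiv]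
  have hPN : (Nat.card P).Coprime (Nat.card N) :=
    hP ▸ ((Nat.Prime.coprime_iff_not_dvd Fact.out).mpr hpN).pow_left _
  rw [← hP]
  refine MulDistribMulAction.card_dvd_card_sub_one fun g n hn hgn => ?_
  set a := ConjAct.ofConjAct (g : ConjAct G)
  have hcomm : Commute a n := by
    have : a * n * a⁻¹ = n := congrArg Subtype.val hgn
    rwa [mul_inv_eq_iff_eq_mul] at this
  have hcop : (orderOf a).Coprime (orderOf (n : G)) := by
    rw [MulEquiv.orderOf_eq, Subgroup.orderOf_coe, Subgroup.orderOf_coe]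
    exact hPN.of_dvd (orderOf_dvd_natCard g) (orderOf_dvd_natCard n)
  have ha : a = 1 := (hG.eq_one_or_eq_one_of_commute hcomm hcop).resolve_right (by simpa using hn)
  simpa [a] using ha

theorem Finset.prod_dvd_of_pairwise_coprime {ι : Type*} {s : Finset ι} {f : ι → ℕ} {n : ℕ}
    (hs : (s : Set ι).Pairwise (Function.onFun Nat.Coprime f)) (hf : ∀ i ∈ s, f i ∣ n) :
    ∏ i ∈ s, f i ∣ n := by
  have : ∏ i ∈ s, (f i : ℤ) ∣ n :=
    Finset.prod_dvd_of_coprime (hs.imp fun _ _ => Nat.isCoprime_iff_coprime.mpr)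
      fun i hi => Int.natCast_dvd_natCast.mpr (hf i hi)
  exact_mod_cast this

theorem prod_pParts_dvd_card_normal_sub_one {G : Type*} [Group G] [Finite G]
    (hG : IsEPPOGroup G) (N : Subgroup G) [N.Normal] :
    (∏ p ∈ (Nat.card G).primeFactors.filter (fun p => ¬ p ∣ Nat.card N),
        p ^ ((Nat.card G).factorization p)) ∣ (Nat.card N - 1) := by
  refine Finset.prod_dvd_of_pairwise_coprime (fun p hp q hq hpq => ?_) fun p hp => ?_
  · simp only [Finset.coe_filter, Set.mem_ofPred_eq, Nat.mem_primeFactors] at hp hq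
    exact ((Nat.coprime_primes hp.1.1 hq.1.1).mpr hpq).pow _ _
  · rw [Finset.mem_filter, Nat.mem_primeFactors] at hp
    have : Fact p.Prime := ⟨hp.1.1⟩
    exact hG.pow_factorization_dvd_card_normal_sub_one N hp.2
end

section
/- Let M be an n×n monomial matrix over a field with M^p = I for a prime p. If M is not diagonal, then 1 is an eigenvalue of M. -/
/-!
Write `M i j ≠ 0 ↔ j = σ i`. Then the support of `M ^ k` is the graph of `σ^[k]`, so `M ^ p = 1`
makes every point `p`-periodic under `σ`, and a point moved by `σ` has minimal period exactly `p`.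
For such a point `i`, the only power `M ^ k` with `k < p` and `(M ^ k) i i ≠ 0` is `M ^ 0`, so
`S = ∑ k < p, M ^ k` is nonzero. Since `(1 - M) * S = 1 - M ^ p = 0`, the matrix `1 - M` is singular.
-/

open Finset Function

namespace Matrix

variable {ι : Type*} [Fintype ι] [DecidableEq ι]

theorem pow_apply_ne_zero_iff {R : Type*} [Semiring R] [NoZeroDivisors R] [Nontrivial R]
    {M : Matrix ι ι R} {σ : ι → ι} (hM : ∀ i j, M i j ≠ 0 ↔ j = σ i) (k : ℕ) (i j : ι) :
    (M ^ k) i j ≠ 0 ↔ j = σ^[k] i := by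
  induction k generalizing j with
  | zero => simp [one_apply, eq_comm]
  | succ k ih =>
    have hsucc : (M ^ (k + 1)) i j = (M ^ k) i (σ^[k] i) * M (σ^[k] i) j := by
      rw [pow_succ, mul_apply, sum_eq_single_of_mem _ (mem_univ _)]
      intro l _ hl
      rw [not_ne_iff.mp (mt (ih l).mp hl), zero_mul]
    rw [hsucc, mul_ne_zero_iff, ih, hM, iterate_succ_apply']
    simp

theorem sum_range_minimalPeriod_pow_apply_self {R : Type*} [Semiring R] [NoZeroDivisors R]
    [Nontrivial R] {M : Matrix ι ι R} {σ : ι → ι} (hM : ∀ i j, M i j ≠ 0 ↔ j = σ i) {i : ι}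
    (hi : 0 < minimalPeriod σ i) :
    (∑ k ∈ range (minimalPeriod σ i), M ^ k) i i = 1 := by
  rw [sum_apply, sum_eq_single_of_mem 0 (mem_range.mpr hi), pow_zero, one_apply_eq]
  intro k hk hk0
  by_contra h
  exact not_isPeriodicPt_of_pos_of_lt_minimalPeriod hk0 (mem_range.mp hk)
    ((pow_apply_ne_zero_iff hM k i i).mp h).symm

theorem not_isUnit_det_one_sub_of_pow_eq_one {R : Type*} [CommRing R] {M : Matrix ι ι R}
    {p : ℕ} (hM : M ^ p = 1) (hS : ∑ k ∈ range p, M ^ k ≠ 0) : ¬IsUnit (1 - M).det := by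
  intro hdet
  have hsingular : (1 - M) * ∑ k ∈ range p, M ^ k = 0 := by
    rw [mul_neg_geom_sum, hM, sub_self]
  exact hS (((isUnit_iff_isUnit_det _).mpr hdet).mul_right_eq_zero.mp hsingular)

end Matrix

open Matrix in
theorem monomial_matrix_root_of_unity_has_eigenvalue_one_general
    {K : Type*} [Field K] {n : ℕ} (M : Matrix (Fin n) (Fin n) K)
    {p : ℕ} (hp : p.Prime) (hM : M ^ p = 1)
    (hrow : ∀ i, ∃! j, M i j ≠ 0)
    (hdiag : ¬ ∀ i j, i ≠ j → M i j = 0) :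
    M.charpoly.IsRoot 1 := by
  have := Fact.mk hp
  choose σ hσ hσ_unique using hrow
  have hsupp : ∀ i j, M i j ≠ 0 ↔ j = σ i := fun i j => ⟨hσ_unique i j, fun h => h ▸ hσ i⟩
  have hperiodic : ∀ i, IsPeriodicPt σ p i := fun i =>
    ((pow_apply_ne_zero_iff hsupp p i i).mp (by simp [hM])).symm
  push Not at hdiag
  obtain ⟨i, j, hij, hMij⟩ := hdiag
  have hmoved : ¬IsFixedPt σ i := fun h => hij (((hsupp i j).mp hMij).trans h).symm
  have hperiod : minimalPeriod σ i = p := minimalPeriod_eq_prime (hperiodic i) hmoved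
  have hS : ∑ k ∈ range p, M ^ k ≠ 0 := by
    intro h
    have hii :=
      sum_range_minimalPeriod_pow_apply_self hsupp (hperiod ▸ hp.pos : 0 < minimalPeriod σ i)
    simp [hperiod, h] at hii
  rw [Polynomial.IsRoot, eval_charpoly, map_one]
  by_contra hdet
  exact not_isUnit_det_one_sub_of_pow_eq_one hM hS (isUnit_iff_ne_zero.mpr hdet)

theorem monomial_matrix_root_of_unity_has_eigenvalue_one
    {K : Type*} [Field K] {n : ℕ} (M : Matrix (Fin n) (Fin n) K)
    {p : ℕ} (hp : p.Prime) (hM : M ^ p = 1)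
    (hrow : ∀ i, ∃! j, M i j ≠ 0) (hcol : ∀ j, ∃! i, M i j ≠ 0)
    (hdiag : ¬ ∀ i j, i ≠ j → M i j = 0) :
    M.charpoly.IsRoot 1 :=
  monomial_matrix_root_of_unity_has_eigenvalue_one_general M hp hM hrow hdiag
end

section
/- Let G be a finite EPPO-group whose Sylow 2-subgroups are generalized quaternion. Then |G| = 2^α q^β for some odd prime q and β ≥ 0, and G has a normal Sylow q-subgroup; in particular G is solvable. -/
open Subgroup

theorem Nat.card_subtype_ne {α : Type*} [Finite α] (a : α) :
    Nat.card {x // x ≠ a} = Nat.card α - 1 := by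
  classical
  rw [← Nat.card_congr (Equiv.optionSubtypeNe a), Finite.card_option, Nat.add_sub_cancel]

section Group

variable {G : Type*} [Group G]

theorem IsConj.orderOf_eq {a b : G} (h : IsConj a b) : orderOf a = orderOf b := by
  obtain ⟨c, hc⟩ := h
  exact hc.orderOf_eq (c : G)

theorem orderOf_conj (x z : G) : orderOf (x * z * x⁻¹) = orderOf z :=
  (isConj_iff.mpr ⟨x, rfl⟩).orderOf_eq.symm

theorem orderOf_mul_comm (a b : G) : orderOf (a * b) = orderOf (b * a) :=
  SemiconjBy.orderOf_eq b (mul_assoc b a b).symm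

theorem IsPGroup.dvd_orderOf_of_ne_one {p : ℕ} [Fact p.Prime] {H : Subgroup G}
    (hH : IsPGroup p H) {g : G} (hg : g ∈ H) (hg1 : g ≠ 1) : p ∣ orderOf g := by
  obtain ⟨n, hn⟩ := IsPGroup.iff_orderOf.mp hH ⟨g, hg⟩
  rw [Subgroup.orderOf_mk] at hn
  rw [hn]
  refine dvd_pow_self p fun hn0 => hg1 ?_
  rwa [hn0, pow_zero, orderOf_eq_one_iff] at hn

theorem Subgroup.index_centralizer_eq_ncard_conjugatesOf (g : G) :
    (centralizer {g}).index = (conjugatesOf g).ncard := by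
  have horbit : MulAction.orbit (ConjAct G) g = conjugatesOf g :=
    Set.ext fun _ => ConjAct.mem_orbit_conjAct.trans isConj_comm
  rw [centralizer_eq_comap_stabilizer, ← horbit, ← MulAction.index_stabilizer]
  exact index_comap_of_surjective _ ConjAct.toConjAct.surjective

theorem Subgroup.isMulCommutative_of_forall_conj_eq_inv (H : Subgroup G) (z : G)
    (h : ∀ a ∈ H, z * a * z⁻¹ = a⁻¹) : IsMulCommutative H := by
  refine isMulCommutative_iff.mpr fun a b => Subtype.ext (inv_injective ?_)
  calc ((a * b : H) : G)⁻¹ = z * (a * b) * z⁻¹ := (h _ (a * b).2).symm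
    _ = (z * a * z⁻¹) * (z * b * z⁻¹) := by group
    _ = ((b * a : H) : G)⁻¹ := by rw [h a a.2, h b b.2]; simp

end Group

namespace QuaternionGroup

theorem eq_a_of_orderOf_eq_two {n : ℕ} [NeZero n] {g : QuaternionGroup n} (hg : orderOf g = 2) :
    g = a n := by
  obtain i | i := g
  · have hi : i ≠ 0 := by
      rintro rfl
      simp at hg
    have hii : a (i + i) = (a 0 : QuaternionGroup n) := by
      rw [← a_mul_a, ← sq, ← one_def, ← hg, pow_orderOf_eq_one]
    have hval : (i + i).val = 0 := by rw [a.inj hii, ZMod.val_zero]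
    have hlt := ZMod.val_lt i
    have hpos := (ZMod.val_pos (n := 2 * n)).mpr hi
    rw [ZMod.val_add] at hval
    obtain ⟨c, hc⟩ := Nat.dvd_of_mod_eq_zero hval
    have hc1 : c = 1 := by
      rcases c with _ | _ | c <;> [omega; rfl; nlinarith]
    rw [← ZMod.natCast_zmod_val i, show i.val = n by subst hc1; omega]
  · simp [orderOf_xa] at hg

theorem existsUnique_orderOf_eq_two (n : ℕ) [NeZero n] :
    ∃! g : QuaternionGroup n, orderOf g = 2 := by
  refine ⟨a n, ?_, fun g hg => eq_a_of_orderOf_eq_two hg⟩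
  have h := orderOf_pow_orderOf_div (x := xa (0 : ZMod (2 * n))) (n := 2)
    (by rw [orderOf_xa]; norm_num) (by rw [orderOf_xa]; norm_num)
  rwa [orderOf_xa, xa_sq] at h

end QuaternionGroup

theorem Subgroup.existsUnique_mem_orderOf_eq_two_of_mulEquiv {G : Type*} [Group G]
    {H : Subgroup G} {n : ℕ} [NeZero n] (e : H ≃* QuaternionGroup n) :
    ∃! z : G, z ∈ H ∧ orderOf z = 2 := by
  obtain ⟨g, hg, huniq⟩ := QuaternionGroup.existsUnique_orderOf_eq_two n
  refine ⟨e.symm g, ⟨(e.symm g).2, by rw [Subgroup.orderOf_coe, e.symm.orderOf_eq, hg]⟩, ?_⟩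
  rintro z ⟨hzH, hz⟩
  have hez : e ⟨z, hzH⟩ = g :=
    huniq _ (show orderOf _ = 2 by rw [e.orderOf_eq, Subgroup.orderOf_mk, hz])
  rw [← hez, e.symm_apply_apply]

namespace IsEPPOGroup

variable {G : Type*} [Group G]

theorem to_subgroup (hG : IsEPPOGroup G) (H : Subgroup G) : IsEPPOGroup H := fun h => by
  simpa only [Subgroup.orderOf_coe] using hG h

theorem eq_one_or_eq_one_of_commute_s13 (hG : IsEPPOGroup G) {x y : G} (hxy : Commute x y)
    (hcop : (orderOf x).Coprime (orderOf y)) : x = 1 ∨ y = 1 := by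
  obtain ⟨p, n, hp, hpn⟩ := hG (x * y)
  rw [hxy.orderOf_mul_eq_mul_orderOf_of_coprime hcop] at hpn
  have hdvd : ∀ {g : G}, orderOf g ∣ p ^ n → g ≠ 1 → p ∣ orderOf g := fun hg hg1 => by
    obtain ⟨i, -, hi⟩ := (Nat.dvd_prime_pow hp).mp hg
    rw [hi]
    refine dvd_pow_self p fun hi0 => hg1 ?_
    rwa [hi0, pow_zero, orderOf_eq_one_iff] at hi
  by_contra! h
  have hpx := hdvd (hpn ▸ dvd_mul_right _ _) h.1
  have hpy := hdvd (hpn ▸ dvd_mul_left _ _) h.2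
  exact hp.one_lt.ne' (Nat.eq_one_of_dvd_coprimes hcop hpx hpy)

theorem isPGroup_centralizer (hG : IsEPPOGroup G) {p : ℕ} [hp : Fact p.Prime] {z : G}
    (hz : orderOf z = p) : IsPGroup p (centralizer {z}) := by
  rw [IsPGroup.iff_orderOf]
  rintro ⟨g, hg⟩
  obtain ⟨r, n, hr, hrn⟩ := hG g
  rw [Subgroup.orderOf_mk, hrn]
  obtain rfl | hrp := eq_or_ne r p
  · exact ⟨n, rfl⟩
  have hcop : (orderOf z).Coprime (orderOf g) := by
    rw [hz, hrn]
    exact ((Nat.coprime_primes hp.out hr).mpr hrp.symm).pow_right n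
  obtain rfl | rfl :=
    hG.eq_one_or_eq_one_of_commute_s13 (mem_centralizer_singleton_iff.mp hg).symm hcop
  · exact absurd hz (by rw [orderOf_one]; exact hp.out.one_lt.ne)
  · exact ⟨0, by rw [← hrn, orderOf_one, pow_zero]⟩

theorem exists_sylow_two_mem [Finite G] (hG : IsEPPOGroup G) {g : G}
    (hg : ¬Odd (orderOf g)) : ∃ P : Sylow 2 G, g ∈ P := by
  obtain ⟨p, n, hp, hpn⟩ := hG g
  obtain rfl : p = 2 := by
    by_contra h
    exact hg (hpn ▸ (hp.odd_of_ne_two h).pow)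
  obtain ⟨P, hP⟩ := (IsPGroup.of_card (by rw [Nat.card_zpowers, hpn]) :
    IsPGroup 2 (zpowers g)).exists_le_sylow
  exact ⟨P, hP (mem_zpowers g)⟩

theorem exists_isPGroup_of_odd_card [Finite G] [IsMulCommutative G] (hG : IsEPPOGroup G)
    (hodd : Odd (Nat.card G)) : ∃ q, q.Prime ∧ Odd q ∧ IsPGroup q G := by
  obtain h1 | h1 := eq_or_ne (Nat.card G) 1
  · exact ⟨3, Nat.prime_three, by decide, IsPGroup.of_card (n := 0) (by rw [h1, pow_zero])⟩
  set q := (Nat.card G).minFac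
  have hq : q.Prime := Nat.minFac_prime h1
  have hq2 : q ≠ 2 := fun h => hodd.not_two_dvd_nat (h ▸ Nat.minFac_dvd _)
  have hunique : ∀ {r : ℕ}, r.Prime → r ∣ Nat.card G → r = q := by
    intro r hr hrG
    by_contra hrq
    have := Fact.mk hr
    have := Fact.mk hq
    obtain ⟨x, hx⟩ := exists_prime_orderOf_dvd_card' q (Nat.minFac_dvd _)
    obtain ⟨y, hy⟩ := exists_prime_orderOf_dvd_card' r hrG
    have hcop : (orderOf x).Coprime (orderOf y) := by
      rw [hx, hy]
      exact (Nat.coprime_primes hq hr).mpr (Ne.symm hrq)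
    obtain rfl | rfl := hG.eq_one_or_eq_one_of_commute_s13 (mul_comm' x y) hcop
    · exact hq.one_lt.ne (by rw [← hx, orderOf_one])
    · exact hr.one_lt.ne (by rw [← hy, orderOf_one])
  exact ⟨q, hq, hq.odd_of_ne_two hq2,
    IsPGroup.of_card (Nat.eq_prime_pow_of_unique_prime_dvd Nat.card_pos.ne' hunique)⟩

end IsEPPOGroup

def SylowTwoHasUniqueInvolution (G : Type*) [Group G] : Prop :=
  ∀ P : Sylow 2 G, ∃! z : G, z ∈ P ∧ orderOf z = 2

theorem SylowTwoHasUniqueInvolution.mem_centralizer_of_conj_mem {G : Type*} [Group G]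
    (hU : SylowTwoHasUniqueInvolution G) {P : Sylow 2 G} {z x : G} (hzP : z ∈ P)
    (hz : orderOf z = 2) (hx : x * z * x⁻¹ ∈ P) : x ∈ centralizer {z} := by
  rw [mem_centralizer_singleton_iff]
  have hconj : x * z * x⁻¹ = z :=
    (hU P).unique ⟨hx, (orderOf_conj x z).trans hz⟩ ⟨hzP, hz⟩
  calc x * z = x * z * x⁻¹ * x := by group
    _ = z * x := by rw [hconj]

namespace IsEPPOGroup

variable {G : Type*} [Group G]

theorem centralizer_eq_sylow (hG : IsEPPOGroup G) (hU : SylowTwoHasUniqueInvolution G)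
    {P : Sylow 2 G} {z : G} (hzP : z ∈ P) (hz : orderOf z = 2) : centralizer {z} = P :=
  P.is_maximal' (hG.isPGroup_centralizer hz) fun _ hx =>
    hU.mem_centralizer_of_conj_mem hzP hz (P.mul_mem (P.mul_mem hx hzP) (P.inv_mem hx))

theorem normalizer_sylow_eq (hG : IsEPPOGroup G) (hU : SylowTwoHasUniqueInvolution G)
    (P : Sylow 2 G) : normalizer (P : Set G) = P := by
  obtain ⟨z, ⟨hzP, hz⟩, -⟩ := hU P
  refine le_antisymm (fun g hg => ?_) le_normalizer
  rw [← hG.centralizer_eq_sylow hU hzP hz]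
  exact hU.mem_centralizer_of_conj_mem hzP hz ((mem_normalizer_iff.mp hg z).mp hzP)

variable [Finite G]

theorem sylow_eq_of_mem (hG : IsEPPOGroup G) (hU : SylowTwoHasUniqueInvolution G)
    {P Q : Sylow 2 G} {g : G} (hP : g ∈ P) (hQ : g ∈ Q) (hg : g ≠ 1) : P = Q := by
  have hu : orderOf (g ^ (orderOf g / 2)) = 2 :=
    orderOf_pow_orderOf_div (orderOf_pos g).ne' (P.isPGroup'.dvd_orderOf_of_ne_one hP hg)
  exact Sylow.ext ((hG.centralizer_eq_sylow hU (pow_mem hP _) hu).symm.trans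
    (hG.centralizer_eq_sylow hU (pow_mem hQ _) hu))

theorem card_not_odd_orderOf (hG : IsEPPOGroup G) (hU : SylowTwoHasUniqueInvolution G)
    (P : Sylow 2 G) : Nat.card {g : G // ¬Odd (orderOf g)} = P.index * (Nat.card P - 1) := by
  -- an element of even order is a nontrivial element of exactly one Sylow `2`-subgroup
  let f : (Σ Q : Sylow 2 G, {x : Q // x ≠ 1}) → {g : G // ¬Odd (orderOf g)} :=
    fun x => ⟨x.2.1, fun hodd => (Nat.not_even_iff_odd.mpr hodd) (even_iff_two_dvd.mpr
      (x.1.isPGroup'.dvd_orderOf_of_ne_one x.2.1.2 fun h => x.2.2 (Subtype.ext h)))⟩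
  have hf : Function.Bijective f := by
    constructor
    · rintro ⟨Q, ⟨x, hxQ⟩, hx⟩ ⟨R, ⟨y, hyR⟩, _⟩ hxy
      obtain rfl : x = y := congrArg Subtype.val hxy
      obtain rfl := hG.sylow_eq_of_mem hU hxQ hyR fun h => hx (Subtype.ext h)
      rfl
    · rintro ⟨g, hg⟩
      obtain ⟨Q, hQ⟩ := hG.exists_sylow_two_mem hg
      refine ⟨⟨Q, ⟨g, hQ⟩, fun h => hg ?_⟩, rfl⟩
      rw [show g = 1 from congrArg Subtype.val h, orderOf_one]
      exact odd_one
  have hfiber (Q : Sylow 2 G) : Nat.card {x : Q // x ≠ 1} = Nat.card P - 1 := by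
    rw [Nat.card_subtype_ne]
    exact congrArg (· - 1) (Nat.card_congr (Sylow.equiv Q P).toEquiv)
  have := Fintype.ofFinite (Sylow 2 G)
  rw [← Nat.card_congr (Equiv.ofBijective f hf), Nat.card_sigma]
  simp only [hfiber, Finset.sum_const, Finset.card_univ, smul_eq_mul]
  rw [← Nat.card_eq_fintype_card, Sylow.card_eq_index_normalizer P, hG.normalizer_sylow_eq hU]

theorem card_odd_orderOf (hG : IsEPPOGroup G) (hU : SylowTwoHasUniqueInvolution G)
    (P : Sylow 2 G) : Nat.card {g : G // Odd (orderOf g)} = P.index := by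
  have hsum : Nat.card {g : G // Odd (orderOf g)} + Nat.card {g : G // ¬Odd (orderOf g)} =
      Nat.card G := by
    rw [← Nat.card_sum, Nat.card_congr (Equiv.sumCompl _)]
  have hP : Nat.card P * P.index = Nat.card G := P.card_mul_index
  obtain ⟨n, hn⟩ := Nat.exists_eq_add_of_lt (Nat.card_pos (α := P))
  rw [hG.card_not_odd_orderOf hU P, hn] at hsum
  rw [hn] at hP
  simp only [zero_add, Nat.add_sub_cancel] at hsum
  linarith

theorem odd_orderOf_mul_of_orderOf_eq_two (hG : IsEPPOGroup G)
    (hU : SylowTwoHasUniqueInvolution G) {t s : G} (ht : orderOf t = 2) (hs : orderOf s = 2) :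
    Odd (orderOf (t * s)) := by
  by_contra heven
  set w := t * s
  set u := w ^ (orderOf w / 2)
  have hu : orderOf u = 2 := orderOf_pow_orderOf_div (orderOf_pos w).ne'
    (even_iff_two_dvd.mp (Nat.not_odd_iff_even.mp heven))
  -- `t` inverts `w`, hence fixes the involution `u` in `⟨w⟩`
  have htw : t * w * t⁻¹ = w⁻¹ := by
    simp only [w, mul_inv_rev, inv_eq_self_of_orderOf_eq_two ht, inv_eq_self_of_orderOf_eq_two hs]
    rw [← mul_assoc t t, ← sq, ← ht, pow_orderOf_eq_one, one_mul]
  have htu : t ∈ centralizer {u} := by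
    refine mem_centralizer_singleton_iff.mpr (mul_inv_eq_iff_eq_mul.mp ?_)
    rw [← MulAut.conj_apply, map_pow, MulAut.conj_apply, htw, inv_pow,
      inv_eq_self_of_orderOf_eq_two hu]
  have hsu : s ∈ centralizer {u} := by
    have hws : s = t⁻¹ * w := by simp [w]
    rw [hws]
    exact mul_mem (inv_mem htu)
      (mem_centralizer_singleton_iff.mpr ((Commute.refl w).pow_right _).eq)
  obtain ⟨Q, hQ⟩ := (hG.isPGroup_centralizer hu).exists_le_sylow
  obtain rfl : t = s := (hU Q).unique ⟨hQ htu, ht⟩ ⟨hQ hsu, hs⟩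
  have hw : w = 1 := by rw [show w = t * t from rfl, ← sq, ← ht, pow_orderOf_eq_one]
  rw [hw, orderOf_one] at heven
  exact heven odd_one

theorem conj_eq_inv_of_odd (hG : IsEPPOGroup G) (hU : SylowTwoHasUniqueInvolution G) {z : G}
    (hz : orderOf z = 2) {a : G} (ha : Odd (orderOf a)) : z * a * z⁻¹ = a⁻¹ := by
  obtain ⟨P, hzP⟩ := hG.exists_sylow_two_mem (g := z) (by rw [hz]; decide)
  have hconj : ∀ t ∈ conjugatesOf z, orderOf t = 2 := fun _ ht => ht.orderOf_eq.symm.trans hz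
  -- `t ↦ z * t` maps the `|G : P|` conjugates of `z` injectively into the `|G : P|` elements
  -- of odd order, so it is onto
  let f : conjugatesOf z → {g : G // Odd (orderOf g)} :=
    fun t => ⟨z * t, hG.odd_orderOf_mul_of_orderOf_eq_two hU hz (hconj t t.2)⟩
  have hcard : Nat.card (conjugatesOf z) = Nat.card {g : G // Odd (orderOf g)} := by
    rw [Nat.card_coe_set_eq, ← index_centralizer_eq_ncard_conjugatesOf,
      hG.centralizer_eq_sylow hU hzP hz, hG.card_odd_orderOf hU P]
  have hf : Function.Surjective f := ((Nat.bijective_iff_injective_and_card f).mpr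
    ⟨fun t t' h => Subtype.ext (mul_left_cancel (congrArg Subtype.val h)), hcard⟩).2
  obtain ⟨⟨t, ht⟩, hta⟩ := hf ⟨a, ha⟩
  obtain rfl : z * t = a := congrArg Subtype.val hta
  rw [mul_inv_rev, inv_eq_self_of_orderOf_eq_two (hconj t ht), inv_eq_self_of_orderOf_eq_two hz,
    ← mul_assoc, ← sq, ← hz, pow_orderOf_eq_one, one_mul]

theorem orderOf_mul_eq_two_of_odd (hG : IsEPPOGroup G) (hU : SylowTwoHasUniqueInvolution G)
    {z : G} (hz : orderOf z = 2) {a : G} (ha : Odd (orderOf a)) : orderOf (z * a) = 2 := by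
  refine orderOf_eq_prime ?_ fun h => ?_
  · calc (z * a) ^ 2 = (z * a * z⁻¹) * a := by
          rw [inv_eq_self_of_orderOf_eq_two hz, sq, ← mul_assoc]
      _ = 1 := by rw [hG.conj_eq_inv_of_odd hU hz ha, inv_mul_cancel]
  · rw [eq_inv_of_mul_eq_one_right h, orderOf_inv, hz] at ha
    exact Nat.not_odd_iff_even.mpr even_two ha

theorem odd_orderOf_mul (hG : IsEPPOGroup G) (hU : SylowTwoHasUniqueInvolution G)
    {z : G} (hz : orderOf z = 2) {a b : G} (ha : Odd (orderOf a)) (hb : Odd (orderOf b)) :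
    Odd (orderOf (a * b)) := by
  have hab : a * b = (a * z) * (z * b) := by
    rw [mul_assoc, ← mul_assoc z, ← sq, ← hz, pow_orderOf_eq_one, one_mul]
  rw [hab]
  refine hG.odd_orderOf_mul_of_orderOf_eq_two hU ?_ (hG.orderOf_mul_eq_two_of_odd hU hz hb)
  rw [orderOf_mul_comm]
  exact hG.orderOf_mul_eq_two_of_odd hU hz ha

end IsEPPOGroup

def oddOrderSubgroup (G : Type*) [Group G]
    (hmul : ∀ {a b : G}, Odd (orderOf a) → Odd (orderOf b) → Odd (orderOf (a * b))) :
    Subgroup G where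
  carrier := {g | Odd (orderOf g)}
  one_mem' := by simp
  mul_mem' := hmul
  inv_mem' := by simp

instance oddOrderSubgroup.normal {G : Type*} [Group G]
    (hmul : ∀ {a b : G}, Odd (orderOf a) → Odd (orderOf b) → Odd (orderOf (a * b))) :
    (oddOrderSubgroup G hmul).Normal :=
  ⟨fun g hg c => show Odd (orderOf (c * g * c⁻¹)) by rwa [orderOf_conj]⟩

theorem IsEPPOGroup.exists_normal_sylow_and_isSolvable {G : Type*} [Group G] [Finite G]
    (hG : IsEPPOGroup G) (hU : SylowTwoHasUniqueInvolution G) :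
    (∃ (q α β : ℕ), q.Prime ∧ Odd q ∧ Nat.card G = 2 ^ α * q ^ β ∧
      ∀ Q : Sylow q G, (Q : Subgroup G).Normal) ∧ Group.IsSolvable G := by
  obtain ⟨P⟩ : Nonempty (Sylow 2 G) := inferInstance
  obtain ⟨z, ⟨-, hz⟩, -⟩ := hU P
  set O := oddOrderSubgroup G (hG.odd_orderOf_mul hU hz)
  have hO : Nat.card O = P.index := hG.card_odd_orderOf hU P
  have : IsMulCommutative O :=
    O.isMulCommutative_of_forall_conj_eq_inv z fun _ ha => hG.conj_eq_inv_of_odd hU hz ha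
  obtain ⟨q, hq, hqodd, hOq⟩ := (hG.to_subgroup O).exists_isPGroup_of_odd_card
    (hO ▸ Nat.not_even_iff_odd.mp fun h => P.not_dvd_index h.two_dvd)
  have := Fact.mk hq
  obtain ⟨α, hα⟩ := IsPGroup.iff_card.mp P.isPGroup'
  obtain ⟨β, hβ⟩ := IsPGroup.iff_card.mp hOq
  have hQ (Q : Sylow q G) : O = Q := Q.is_maximal' hOq fun g hg => by
    obtain ⟨k, hk⟩ := IsPGroup.iff_orderOf.mp Q.isPGroup' ⟨g, hg⟩
    show Odd (orderOf g)
    rw [← Subgroup.orderOf_mk g hg, hk]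
    exact hqodd.pow
  refine ⟨⟨q, α, β, hq, hqodd, by rw [← P.card_mul_index, hα, ← hO, hβ],
    fun Q => hQ Q ▸ inferInstance⟩, ?_⟩
  have hindex : O.index = Nat.card P := by
    refine Nat.eq_of_mul_eq_mul_left (Nat.card_pos (α := O)) ?_
    rw [O.card_mul_index, hO, mul_comm, P.card_mul_index]
  have hquot := (IsPGroup.of_card (hindex.trans hα) : IsPGroup 2 (G ⧸ O)).isNilpotent
  have hOsolv : Group.IsSolvable O := Group.isSolvable_of_comm mul_comm'
  exact Group.isSolvable_of_ker_le_range O.subtype (QuotientGroup.mk' O) (by simp)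

theorem EPPO_quaternion_sylow_two {G : Type*} [Group G] [Finite G]
    (hG : IsEPPOGroup G)
    (hsyl : ∀ P : Sylow 2 G, ∃ k : ℕ, 1 ≤ k ∧
      Nonempty ((P : Subgroup G) ≃* QuaternionGroup (2 ^ k))) :
    (∃ (q α β : ℕ), q.Prime ∧ Odd q ∧ Nat.card G = 2 ^ α * q ^ β ∧
      ∀ Q : Sylow q G, (Q : Subgroup G).Normal) ∧ IsSolvable G := by
  refine hG.exists_normal_sylow_and_isSolvable fun P => ?_
  obtain ⟨k, -, ⟨e⟩⟩ := hsyl P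
  exact Subgroup.existsUnique_mem_orderOf_eq_two_of_mulEquiv e
end

section
/- Let G be a finite group of order p^α q^β with a cyclic Sylow p-subgroup P and a minimal normal Sylow q-subgroup Q satisfying C_G(Q) = Q. Then β equals the multiplicative order of q modulo p^α. -/
/-!
Let `g` generate the cyclic group `P`. Being a minimal normal `q`-subgroup, `Q` is elementary
abelian (its centre and its elements of order dividing `q` form characteristic subgroups), so it
is an `𝔽_q`-vector space of dimension `β` on which conjugation by `g` is a linear operator `T`.
As `Q` is abelian and `G = Q⟨g⟩`, every `T`-invariant subspace is a normal subgroup of `G`, so `T`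
acts irreducibly; as `C_G(Q) = Q` meets `⟨g⟩` trivially, `T` has order `|P| = p ^ α`.
The commutative algebra `𝔽_q[T]` acts faithfully on the simple module `Q`, so it is a field over
which `Q` is one-dimensional: `q ^ β = |𝔽_q[T]|`. This field is generated by the unit `T` of order
`p ^ α`, so its degree over `𝔽_q`, the order of the Frobenius `x ↦ x ^ q`, is the least `b` with
`T ^ (q ^ b) = T`, i.e. with `q ^ b ≡ 1 [MOD p ^ α]`.
-/

open scoped IsMulCommutative

theorem FiniteField.finrank_eq_orderOf_of_adjoin_eq_top {K L : Type*} [Field K] [Finite K]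
    [Field L] [Finite L] [Algebra K L] (ζ : Lˣ) (hζ : Algebra.adjoin K {(ζ : L)} = ⊤) :
    Module.finrank K L = orderOf (Nat.card K : ZMod (orderOf ζ)) := by
  have := Fintype.ofFinite K
  rw [← orderOf_frobeniusAlgHom K L, Nat.card_eq_fintype_card]
  refine orderOf_eq_orderOf_iff.mpr fun k => ?_
  have hpow : ∀ x : L, (frobeniusAlgHom K L ^ k) x = x ^ Fintype.card K ^ k := fun x => by
    rw [AlgHom.coe_pow, coe_frobeniusAlgHom, pow_iterate]
  have hfrob : frobeniusAlgHom K L ^ k = 1 ↔ (ζ : L) ^ Fintype.card K ^ k = ζ :=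
    ⟨fun h => by simpa [hpow] using congr($h ζ),
      fun h => AlgHom.ext_of_adjoin_eq_top hζ (by rintro _ rfl; rw [hpow, h, AlgHom.one_apply])⟩
  rw [hfrob, ← Nat.cast_pow, ← Nat.cast_one, ZMod.natCast_eq_natCast_iff, ← pow_eq_pow_iff_modEq,
    pow_one, ← Units.val_pow_eq_pow_val, Units.val_inj]

theorem IsSimpleModule.isField_of_faithfulSMul {R M : Type*} [CommRing R] [AddCommGroup M]
    [Module R M] [IsSimpleModule R M] [FaithfulSMul R M] : IsField R := by
  have : Nontrivial M := IsSimpleModule.nontrivial R M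
  have : Nontrivial R := Module.nontrivial R M
  rw [Ring.isField_iff_maximal_bot, ← Module.annihilator_eq_bot.mpr ‹_›]
  exact IsSimpleModule.annihilator_isMaximal

namespace Module.End

variable {F V : Type*} [Field F] [AddCommGroup V] [Module F V]

theorem isSimpleModule_adjoin [Nontrivial V] {T : Module.End F V}
    (hT : ∀ W ∈ T.invtSubmodule, W = ⊥ ∨ W = ⊤) : IsSimpleModule (Algebra.adjoin F {T}) V := by
  refine (isSimpleModule_iff _ _).mpr { eq_bot_or_eq_top := fun W => ?_ }
  have hW : W.restrictScalars F ∈ T.invtSubmodule := fun v hv =>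
    W.smul_mem ⟨T, Algebra.self_mem_adjoin_singleton F T⟩ hv
  simpa using hT _ hW

theorem natCard_eq_pow_orderOf_of_irreducible [Finite F] [Finite V] [Nontrivial V]
    {T : Module.End F V} (hT0 : T ≠ 0) (hT : ∀ W ∈ T.invtSubmodule, W = ⊥ ∨ W = ⊤) :
    Nat.card V = Nat.card F ^ orderOf (Nat.card F : ZMod (orderOf T)) := by
  set R := Algebra.adjoin F {T}
  have := isSimpleModule_adjoin hT
  let : Field R := (IsSimpleModule.isField_of_faithfulSMul (M := V)).toField
  have : _root_.Finite (Module.End F V) :=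
    .of_injective (DFunLike.coe : Module.End F V → V → V) DFunLike.coe_injective
  have hTR : (⟨T, Algebra.self_mem_adjoin_singleton F T⟩ : R) ≠ 0 := by
    simpa [← Subtype.coe_ne_coe] using hT0
  set ζ : Rˣ := Units.mk0 _ hTR
  have horder : orderOf ζ = orderOf T := by
    rw [← orderOf_units]
    exact (orderOf_injective R.val.toMonoidHom Subtype.val_injective (ζ : R)).symm
  have hgen : Algebra.adjoin F {(ζ : R)} = ⊤ := by
    rw [← Algebra.adjoin_adjoin_coe_preimage (s := {T})]
    congr 1
    ext ⟨x, hx⟩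
    simp [ζ]
  calc Nat.card V = Nat.card R := by
        rw [Module.natCard_eq_pow_finrank (K := R),
          isSimpleModule_iff_finrank_eq_one.mp inferInstance, pow_one]
    _ = Nat.card F ^ Module.finrank F R := Module.natCard_eq_pow_finrank
    _ = _ := by rw [FiniteField.finrank_eq_orderOf_of_adjoin_eq_top ζ hgen, horder]

end Module.End

theorem Sylow.card_eq_pow_of_card_eq {G : Type*} [Group G] [Finite G] {p : ℕ} [Fact p.Prime]
    (P : Sylow p G) {a m : ℕ} (hm : ¬p ∣ m) (hG : Nat.card G = p ^ a * m) :
    Nat.card P = p ^ a := by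
  have hp : p.Prime := Fact.out
  have hm0 : m ≠ 0 := by rintro rfl; simp at hm
  rw [P.card_eq_multiplicity, hG, Nat.factorization_mul (pow_ne_zero _ hp.ne_zero) hm0,
    Finsupp.add_apply, hp.factorization_pow, Finsupp.single_eq_same,
    Nat.factorization_eq_zero_of_not_dvd hm, add_zero]

namespace Subgroup

variable {G : Type*} [Group G]

theorem sup_eq_top_of_coprime_card [Finite G] {H K : Subgroup G}
    (hHK : (Nat.card H).Coprime (Nat.card K)) (hG : Nat.card G = Nat.card H * Nat.card K) :
    H ⊔ K = ⊤ := by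
  refine eq_top_of_card_eq _ (Nat.dvd_antisymm (card_subgroup_dvd_card _) ?_)
  rw [hG]
  exact hHK.mul_dvd_of_dvd_of_dvd (card_dvd_of_le le_sup_left) (card_dvd_of_le le_sup_right)

theorem map_subtype_eq_self_iff {H : Subgroup G} {K : Subgroup H} :
    K.map H.subtype = H ↔ K = ⊤ := by
  rw [← map_subtype_inj (H := H), ← MonoidHom.range_eq_map, range_subtype]

def IsMinimalNormal (N : Subgroup G) : Prop :=
  N.Normal ∧ N ≠ ⊥ ∧ ∀ M : Subgroup G, M.Normal → M ≤ N → M ≠ ⊥ → M = N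

namespace IsMinimalNormal

variable {N : Subgroup G}

theorem nontrivial (hN : N.IsMinimalNormal) : Nontrivial N :=
  (nontrivial_iff_ne_bot N).mpr hN.2.1

theorem eq_bot_or_eq_top_of_normal_map (hN : N.IsMinimalNormal) (K : Subgroup N)
    (hK : (K.map N.subtype).Normal) : K = ⊥ ∨ K = ⊤ :=
  or_iff_not_imp_left.mpr fun hbot => map_subtype_eq_self_iff.mp <| hN.2.2 _ hK
    (map_subtype_le K) ((map_eq_bot_iff_of_injective K N.subtype_injective).not.mpr hbot)

theorem eq_bot_or_eq_top_of_characteristic (hN : N.IsMinimalNormal) (K : Subgroup N)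
    [K.Characteristic] : K = ⊥ ∨ K = ⊤ :=
  have := hN.1
  hN.eq_bot_or_eq_top_of_normal_map K inferInstance

theorem isMulCommutative (hN : N.IsMinimalNormal) {q : ℕ} [Fact q.Prime] [Finite N]
    (hq : IsPGroup q N) : IsMulCommutative N := by
  have := hN.nontrivial
  refine center_eq_top_iff.mp ((hN.eq_bot_or_eq_top_of_characteristic _).resolve_left ?_)
  exact (nontrivial_iff_ne_bot _).mp hq.center_nontrivial

theorem pow_eq_one_of_isPGroup (hN : N.IsMinimalNormal) {q : ℕ} [Fact q.Prime] [Finite N]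
    (hq : IsPGroup q N) (x : N) : x ^ q = 1 := by
  have := hN.isMulCommutative hq
  have : ((powMonoidHom q : N →* N).ker).Characteristic :=
    characteristic_iff_le_comap.mpr fun φ y hy => by simp_all [MonoidHom.mem_ker, ← map_pow]
  have := hN.nontrivial
  obtain ⟨y, hy⟩ := exists_prime_orderOf_dvd_card' (G := N) q
    (hq.card_eq_or_dvd.resolve_left Finite.one_lt_card.ne')
  have hker : (powMonoidHom q : N →* N).ker ≠ ⊥ := by
    refine ne_bot_iff_exists_ne_one.mpr ⟨⟨y, ?_⟩, fun h => ?_⟩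
    · rw [MonoidHom.mem_ker, powMonoidHom_apply, ← hy, pow_orderOf_eq_one]
    · have : orderOf y = 1 := orderOf_eq_one_iff.mpr (congrArg Subtype.val h)
      exact (Fact.out : q.Prime).ne_one (hy ▸ this)
  rw [← powMonoidHom_apply, ← MonoidHom.mem_ker,
    (hN.eq_bot_or_eq_top_of_characteristic _).resolve_left hker]
  exact mem_top x

end IsMinimalNormal

section conjRepresentation

variable (N : Subgroup G) [N.Normal] [IsMulCommutative N] (n : ℕ) [Module (ZMod n) (Additive N)]

def conjRepresentation : Representation (ZMod n) G (Additive N) where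
  toFun g := (MulAut.conjNormal g).toMonoidHom.toAdditive.toZModLinearMap n
  map_one' := by ext; simp
  map_mul' g h := by ext; simp [mul_assoc]

variable {N n}

@[simp]
theorem conjRepresentation_apply (g : G) (v : Additive N) :
    ((N.conjRepresentation n g v).toMul : G) = g * v.toMul * g⁻¹ := rfl

theorem conjRepresentation_eq_one_iff {g : G} :
    N.conjRepresentation n g = 1 ↔ g ∈ centralizer N := by
  have hv : ∀ v : Additive N, N.conjRepresentation n g v = v ↔ g * v.toMul = v.toMul * g := by
    intro v
    rw [← Additive.toMul.injective.eq_iff, ← Subtype.coe_inj, conjRepresentation_apply,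
      mul_inv_eq_iff_eq_mul]
  simp only [LinearMap.ext_iff, Module.End.one_apply, hv, mem_centralizer_iff, SetLike.mem_coe]
  exact ⟨fun h x hx => (h (Additive.ofMul ⟨x, hx⟩)).symm, fun h v => (h _ v.toMul.2).symm⟩

theorem orderOf_conjRepresentation {g : G} (hg : Disjoint (zpowers g) (centralizer N)) :
    orderOf (N.conjRepresentation n g) = orderOf g := by
  refine orderOf_eq_orderOf_iff.mpr fun k => ?_
  rw [← map_pow, conjRepresentation_eq_one_iff]
  exact ⟨fun hk => disjoint_def.mp hg (pow_mem (mem_zpowers g) k) hk, fun hk => hk ▸ one_mem _⟩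

theorem normal_map_of_mem_invtSubmodule {W : Submodule (ZMod n) (Additive N)}
    (hW : W ∈ (N.conjRepresentation n).invtSubmodule) :
    ((AddSubgroup.toSubgroup' W.toAddSubgroup).map N.subtype).Normal := by
  refine ⟨?_⟩
  rintro _ ⟨x, hx, rfl⟩ g
  exact ⟨(N.conjRepresentation n g (Additive.ofMul x)).toMul,
    (N.conjRepresentation n).mem_invtSubmodule.mp hW g hx, rfl⟩

theorem mem_invtSubmodule_of_sup_zpowers_eq_top [Finite G] {g : G} (hg : N ⊔ zpowers g = ⊤)
    {W : Submodule (ZMod n) (Additive N)}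
    (hW : W ∈ Module.End.invtSubmodule (N.conjRepresentation n g)) :
    W ∈ (N.conjRepresentation n).invtSubmodule := by
  let S : Submonoid G :=
    { carrier := {h | W ∈ Module.End.invtSubmodule (N.conjRepresentation n h)}
      one_mem' := by simp
      mul_mem' := fun ha hb => by
        rw [Set.mem_ofPred_eq, map_mul]
        exact Module.End.invtSubmodule.comp _ ha hb }
  -- In a finite group the submonoid generated by `N ∪ {g}` is already the subgroup `N ⊔ ⟨g⟩`.
  have hS : (⊤ : Subgroup G).toSubmonoid ≤ S := by
    rw [← hg, zpowers_eq_closure, ← closure_eq N, ← closure_union, closure_toSubmonoid_of_finite,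
      Submonoid.closure_le]
    rintro h (hh | rfl)
    · simp [S, conjRepresentation_eq_one_iff.mpr (le_centralizer N hh)]
    · exact hW
  exact (N.conjRepresentation n).mem_invtSubmodule.mpr fun h => hS (mem_top h)

theorem IsMinimalNormal.eq_bot_or_eq_top_of_mem_invtSubmodule (hN : N.IsMinimalNormal)
    {W : Submodule (ZMod n) (Additive N)} (hW : W ∈ (N.conjRepresentation n).invtSubmodule) :
    W = ⊥ ∨ W = ⊤ :=
  (hN.eq_bot_or_eq_top_of_normal_map _ (normal_map_of_mem_invtSubmodule hW)).imp
    (by simp [← Submodule.toAddSubgroup_inj]) (by simp [← Submodule.toAddSubgroup_eq_top])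

end conjRepresentation

end Subgroup

theorem beta_eq_multiplicative_order_general {G : Type*} [Group G] [Finite G]
    {p q : ℕ} (hp : p.Prime) (hq : q.Prime) (hpq : p ≠ q)
    {α β : ℕ}
    (hcard : Nat.card G = p ^ α * q ^ β)
    [Fact p.Prime] [Fact q.Prime]
    (P : Sylow p G) (hP : IsCyclic (P : Subgroup G))
    (Q : Sylow q G) (hQn : (Q : Subgroup G).Normal)
    (hmin : (Q : Subgroup G) ≠ ⊥ ∧ ∀ N : Subgroup G, N.Normal → N ≤ Q → N ≠ ⊥ →
      N = (Q : Subgroup G))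
    (hcent : Subgroup.centralizer ((Q : Subgroup G) : Set G) = (Q : Subgroup G)) :
    β = orderOf (q : ZMod (p ^ α)) := by
  have hcop : p.Coprime q := (Nat.coprime_primes hp hq).mpr hpq
  have hPcard : Nat.card P = p ^ α :=
    P.card_eq_pow_of_card_eq (hp.coprime_iff_not_dvd.mp (hcop.pow_right β)) hcard
  have hQcard : Nat.card Q = q ^ β :=
    Q.card_eq_pow_of_card_eq (hq.coprime_iff_not_dvd.mp (hcop.symm.pow_right α))
      (by rw [hcard, mul_comm])
  have hQmin : (Q : Subgroup G).IsMinimalNormal := ⟨hQn, hmin⟩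
  have := hQmin.nontrivial
  have := hQmin.isMulCommutative Q.isPGroup'
  -- `ZMod q`-module structures are unique, so this one may as well be opaque.
  have : Module (ZMod q) (Additive Q) := AddCommGroup.zmodModule fun x =>
    congrArg Additive.ofMul (hQmin.pow_eq_one_of_isPGroup Q.isPGroup' x.toMul)
  obtain ⟨g, hg⟩ := ((P : Subgroup G).isCyclic_iff_exists_zpowers_eq_top).mp hP
  set ρ := (Q : Subgroup G).conjRepresentation q
  have hsup : (Q : Subgroup G) ⊔ Subgroup.zpowers g = ⊤ := by
    rw [hg]
    exact Subgroup.sup_eq_top_of_coprime_card (by rw [hQcard, hPcard]; exact hcop.symm.pow β α)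
      (by rw [hcard, hQcard, hPcard, mul_comm])
  have horder : orderOf (ρ g) = p ^ α := by
    rw [Subgroup.orderOf_conjRepresentation (by
      rw [hcent, hg]; exact IsPGroup.disjoint_of_ne p q hpq _ _ P.isPGroup' Q.isPGroup'),
      ← Nat.card_zpowers, hg, hPcard]
  have hT0 : ρ g ≠ 0 := LinearMap.ne_zero_of_injective (ρ.apply_bijective g).1
  have hirr : ∀ W ∈ Module.End.invtSubmodule (ρ g), W = ⊥ ∨ W = ⊤ := fun W hW =>
    hQmin.eq_bot_or_eq_top_of_mem_invtSubmodule
      (Subgroup.mem_invtSubmodule_of_sup_zpowers_eq_top hsup hW)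
  have hV := Module.End.natCard_eq_pow_orderOf_of_irreducible hT0 hirr
  rw [Nat.card_zmod, horder] at hV
  exact Nat.pow_right_injective hq.two_le (hQcard.symm.trans hV)

theorem beta_eq_multiplicative_order {G : Type*} [Group G] [Finite G]
    {p q : ℕ} (hp : p.Prime) (hq : q.Prime) (hpq : p ≠ q)
    {α β : ℕ} (hα : 0 < α) (hβ : 0 < β)
    (hcard : Nat.card G = p ^ α * q ^ β)
    [Fact p.Prime] [Fact q.Prime]
    (P : Sylow p G) (hP : IsCyclic (P : Subgroup G))
    (Q : Sylow q G) (hQn : (Q : Subgroup G).Normal)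
    (hmin : (Q : Subgroup G) ≠ ⊥ ∧ ∀ N : Subgroup G, N.Normal → N ≤ Q → N ≠ ⊥ →
      N = (Q : Subgroup G))
    (hcent : Subgroup.centralizer ((Q : Subgroup G) : Set G) = (Q : Subgroup G)) :
    β = orderOf (q : ZMod (p ^ α)) :=
  beta_eq_multiplicative_order_general hp hq hpq hcard P hP Q hQn hmin hcent
end
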